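/- Let m > 0 and let a₁, a₂ ∈ (−∞, 4m²). For every b₂ ∈ ℝ there exist b₀, b₁ ∈ ℝ with b₀ ≠ 0 and pairwise distinct nonzero real numbers γ₀, γ₁, γ₂ ∈ (−∞, 4m²) such that for each i ∈ {0, 1, 2}: (a₁ − γᵢ)·(a₂ − γᵢ)·J(γᵢ) = b₀/γᵢ + b₁ + b₂·γᵢ. -/

import Mathlib

open MeasureTheory Set Real

/-- The spectral density `ρ(M) = (1/(16π²M))·√(1 − 4m²/M)` for `M ≥ 4m²`, and `0` otherwise. -/
noncomputable def rho (m M : ℝ) : ℝ :=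
  if 4 * m ^ 2 ≤ M then (1 / (16 * Real.pi ^ 2 * M)) * Real.sqrt (1 - 4 * m ^ 2 / M) else 0

/-- The Stieltjes transform `J(γ) = ∫_{4m²}^∞ ρ(M)/(M − γ) dM`. -/
noncomputable def Jfun (m γ : ℝ) : ℝ :=
  ∫ M in Set.Ici (4 * m ^ 2), rho m M / (M - γ)

/-! Write `S(γ) = (a₁ - γ)(a₂ - γ) J(γ) - b₂ γ`; the required identity is `γ S(γ) = b₀ + b₁ γ`, so
we need a line `b₀ + b₁ γ` with `b₀ ≠ 0` meeting the graph of `γ S(γ)` three times. Near the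
threshold `ρ(M) ≍ √(M - 4m²)`, which makes the difference quotients of `J` unbounded as
`γ → 4m²`; hence `S u < S v` for some `0 < u < v < 4m²`. Far out `ρ(M) ≥ 1/(32π²M)`, so `-γ J(γ)`
grows like `log |γ|` and `S(γ)/γ → -∞` as `γ → -∞`. The line of slope `S v` through `(0, -δ)`,
with `δ` small, lies above the graph far to the left and at `u` and below it at `0` and at `v`;
the intermediate value theorem gives the three points. -/

open Filter Topology

lemma rho_nonneg (m M : ℝ) : 0 ≤ rho m M := by
  unfold rho
  split_ifs with h
  · have : 0 ≤ M := (by positivity : (0 : ℝ) ≤ 4 * m ^ 2).trans h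
    positivity
  · exact le_rfl

lemma rho_le (m : ℝ) {M : ℝ} (hM : 0 ≤ M) : rho m M ≤ 1 / (16 * π ^ 2 * M) := by
  unfold rho
  split_ifs
  · refine mul_le_of_le_one_right (by positivity) (sqrt_le_one.mpr ?_)
    have : 0 ≤ 4 * m ^ 2 / M := by positivity
    linarith
  · positivity

lemma measurable_rho (m : ℝ) : Measurable (rho m) :=
  Measurable.ite (measurableSet_le measurable_const measurable_id) (by fun_prop) measurable_const

lemma sqrt_div_le_rho {m M : ℝ} (hm : 0 < m) (hM : 4 * m ^ 2 ≤ M) (hM' : M ≤ 5 * m ^ 2) :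
    √(M - 4 * m ^ 2) / (16 * π ^ 2 * (5 * m ^ 2) * √(5 * m ^ 2)) ≤ rho m M := by
  have hM0 : 0 < M := lt_of_lt_of_le (by positivity) hM
  calc √(M - 4 * m ^ 2) / (16 * π ^ 2 * (5 * m ^ 2) * √(5 * m ^ 2))
      ≤ √(M - 4 * m ^ 2) / (16 * π ^ 2 * M * √M) := by gcongr
    _ = rho m M := by
      rw [rho, if_pos hM, one_sub_div hM0.ne', sqrt_div' _ hM0.le]
      field_simp

lemma inv_le_rho {m M : ℝ} (hm : 0 < m) (hM : 8 * m ^ 2 ≤ M) : 1 / (32 * π ^ 2 * M) ≤ rho m M := by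
  have hM0 : 0 < M := lt_of_lt_of_le (by positivity) hM
  have hhalf : 1 / 2 ≤ √(1 - 4 * m ^ 2 / M) := by
    rw [le_sqrt' (by norm_num), le_sub_comm, div_le_iff₀ hM0]
    nlinarith
  rw [rho, if_pos (by linarith)]
  calc 1 / (32 * π ^ 2 * M) = 1 / (16 * π ^ 2 * M) * (1 / 2) := by field_simp; ring
    _ ≤ _ := mul_le_mul_of_nonneg_left hhalf (by positivity)

lemma mul_le_sub_of_lt {a γ M : ℝ} (ha : 0 < a) (hγ : γ < a) (hM : a ≤ M) :
    (a - γ) / (2 * a - γ) * M ≤ M - γ := by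
  rw [div_mul_eq_mul_div, div_le_iff₀ (by linarith)]
  nlinarith [sq_nonneg (a - γ), mul_nonneg ha.le (sub_nonneg.2 hM)]

lemma integrableOn_rho_div_sub {m γ : ℝ} (hm : 0 < m) (hγ : γ < 4 * m ^ 2) :
    IntegrableOn (fun M => rho m M / (M - γ)) (Ici (4 * m ^ 2)) := by
  have ha : 0 < 4 * m ^ 2 := by positivity
  set κ := (4 * m ^ 2 - γ) / (2 * (4 * m ^ 2) - γ)
  have hκ : 0 < κ := div_pos (by linarith) (by linarith)
  have hdom : IntegrableOn (fun M : ℝ => 1 / (16 * π ^ 2 * κ) * M ^ (-2 : ℝ)) (Ici (4 * m ^ 2)) :=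
    (integrableOn_Ici_iff_integrableOn_Ioi).mpr
      ((integrableOn_Ioi_rpow_of_lt (by norm_num) ha).const_mul _)
  refine hdom.mono' ((measurable_rho m).div (by fun_prop)).aestronglyMeasurable ?_
  filter_upwards [ae_restrict_mem measurableSet_Ici] with M (hM : 4 * m ^ 2 ≤ M)
  have hM0 : 0 < M := ha.trans_le hM
  have hκM : κ * M ≤ M - γ := mul_le_sub_of_lt ha hγ hM
  rw [norm_of_nonneg (div_nonneg (rho_nonneg m M) (by linarith)), rpow_neg hM0.le, rpow_two]
  calc rho m M / (M - γ) ≤ 1 / (16 * π ^ 2 * M) / (κ * M) :=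
        div_le_div₀ (by positivity) (rho_le m hM0.le) (by positivity) hκM
    _ = 1 / (16 * π ^ 2 * κ) * (M ^ 2)⁻¹ := by field_simp

lemma Jfun_nonneg (m : ℝ) {γ : ℝ} (hγ : γ < 4 * m ^ 2) : 0 ≤ Jfun m γ :=
  setIntegral_nonneg measurableSet_Ici fun M (hM : 4 * m ^ 2 ≤ M) =>
    div_nonneg (rho_nonneg m M) (by linarith)

lemma continuousOn_Jfun {m v : ℝ} (hm : 0 < m) (hv : v < 4 * m ^ 2) :
    ContinuousOn (Jfun m) (Iic v) := by
  refine continuousOn_of_dominated (bound := fun M => rho m M / (M - v))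
    (fun γ _ => ((measurable_rho m).div (by fun_prop)).aestronglyMeasurable) ?_
    (integrableOn_rho_div_sub hm hv) ?_
  · intro γ (hγ : γ ≤ v)
    filter_upwards [ae_restrict_mem measurableSet_Ici] with M (hM : 4 * m ^ 2 ≤ M)
    rw [norm_of_nonneg (div_nonneg (rho_nonneg m M) (by linarith))]
    exact div_le_div_of_nonneg_left (rho_nonneg m M) (by linarith) (by linarith)
  · filter_upwards [ae_restrict_mem measurableSet_Ici] with M (hM : 4 * m ^ 2 ≤ M)
    exact continuousOn_const.div (continuousOn_const.sub continuousOn_id)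
      fun γ (hγ : γ ≤ v) => by linarith

lemma setIntegral_Icc_le_setIntegral_Ici {f g : ℝ → ℝ} {a p q : ℝ} (hap : a ≤ p)
    (hf : IntegrableOn f (Ici a)) (hf₀ : ∀ x ∈ Ici a, 0 ≤ f x) (hg : IntegrableOn g (Icc p q))
    (hgf : ∀ x ∈ Icc p q, g x ≤ f x) : ∫ x in Icc p q, g x ≤ ∫ x in Ici a, f x := by
  have hsub : Icc p q ⊆ Ici a := fun x hx => hap.trans hx.1
  calc ∫ x in Icc p q, g x ≤ ∫ x in Icc p q, f x :=
        setIntegral_mono_on hg (hf.mono_set hsub) measurableSet_Icc hgf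
    _ ≤ ∫ x in Ici a, f x :=
        setIntegral_mono_set hf ((ae_restrict_iff' measurableSet_Ici).2 (ae_of_all _ hf₀))
          hsub.eventuallyLE

lemma exists_mul_sqrt_le_Jfun_sub {m : ℝ} (hm : 0 < m) :
    ∃ c > 0, ∀ ε, 0 < ε → 2 * ε ≤ m ^ 2 →
      c * √ε ≤ Jfun m (4 * m ^ 2 - ε) - Jfun m (4 * m ^ 2 - 2 * ε) := by
  set D := 16 * π ^ 2 * (5 * m ^ 2) * √(5 * m ^ 2)
  have hD : 0 < D := by positivity
  refine ⟨1 / (12 * D), by positivity, fun ε hε hεm => ?_⟩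
  have hu : 4 * m ^ 2 - 2 * ε < 4 * m ^ 2 := by linarith
  have hv : 4 * m ^ 2 - ε < 4 * m ^ 2 := by linarith
  have hint := (integrableOn_rho_div_sub hm hv).sub (integrableOn_rho_div_sub hm hu)
  have hdiff_nonneg : ∀ M ∈ Ici (4 * m ^ 2),
      0 ≤ rho m M / (M - (4 * m ^ 2 - ε)) - rho m M / (M - (4 * m ^ 2 - 2 * ε)) :=
    fun M (hM : 4 * m ^ 2 ≤ M) => sub_nonneg.2 <|
      div_le_div_of_nonneg_left (rho_nonneg m M) (by linarith) (by linarith)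
  have hlower : ∀ M ∈ Icc (4 * m ^ 2 + ε) (4 * m ^ 2 + 2 * ε), √ε / D / (12 * ε) ≤
      rho m M / (M - (4 * m ^ 2 - ε)) - rho m M / (M - (4 * m ^ 2 - 2 * ε)) := by
    rintro M ⟨hM₁, hM₂⟩
    have hρ : √ε / D ≤ rho m M :=
      (div_le_div_of_nonneg_right (sqrt_le_sqrt (by linarith)) hD.le).trans
        (sqrt_div_le_rho hm (by linarith) (by linarith))
    have hden : (M - (4 * m ^ 2 - 2 * ε)) * (M - (4 * m ^ 2 - ε)) ≤ 12 * ε ^ 2 := by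
      nlinarith
    calc √ε / D / (12 * ε) = √ε / D * ε / (12 * ε ^ 2) := by field_simp
      _ ≤ rho m M * ε / ((M - (4 * m ^ 2 - 2 * ε)) * (M - (4 * m ^ 2 - ε))) :=
        div_le_div₀ (mul_nonneg (rho_nonneg m M) hε.le) (mul_le_mul_of_nonneg_right hρ hε.le)
          (mul_pos (by linarith) (by linarith)) hden
      _ = _ := by
        rw [div_sub_div _ _ (by linarith) (by linarith)]
        ring
  calc 1 / (12 * D) * √ε = ∫ _ in Icc (4 * m ^ 2 + ε) (4 * m ^ 2 + 2 * ε), √ε / D / (12 * ε) := by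
        rw [setIntegral_const, Real.volume_real_Icc_of_le (by linarith), smul_eq_mul]
        field_simp
        ring
    _ ≤ _ := setIntegral_Icc_le_setIntegral_Ici (by linarith) hint hdiff_nonneg
        (integrableOn_const (by simp)) hlower
    _ = _ := integral_sub (integrableOn_rho_div_sub hm hv) (integrableOn_rho_div_sub hm hu)

lemma log_div_le_mul_Jfun_neg {m X : ℝ} (hm : 0 < m) (hX : 8 * m ^ 2 ≤ X) :
    log (X / (8 * m ^ 2)) / (64 * π ^ 2) ≤ X * Jfun m (-X) := by
  have h8 : 0 < 8 * m ^ 2 := by positivity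
  have hX0 : 0 < X := h8.trans_le hX
  have hlower : ∀ M ∈ Icc (8 * m ^ 2) X, 1 / (64 * π ^ 2 * X) * M⁻¹ ≤ rho m M / (M - -X) := by
    rintro M ⟨hM₁, hM₂⟩
    have hM0 : 0 < M := h8.trans_le hM₁
    calc 1 / (64 * π ^ 2 * X) * M⁻¹ = 1 / (32 * π ^ 2 * M) / (2 * X) := by field_simp; ring
      _ ≤ rho m M / (M - -X) :=
        div_le_div₀ (rho_nonneg m M) (inv_le_rho hm hM₁) (by linarith) (by linarith)
  have hinv : ∫ M in Icc (8 * m ^ 2) X, 1 / (64 * π ^ 2 * X) * M⁻¹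
      = 1 / (64 * π ^ 2 * X) * log (X / (8 * m ^ 2)) := by
    rw [integral_Icc_eq_integral_Ioc, ← intervalIntegral.integral_of_le hX,
      intervalIntegral.integral_const_mul, integral_inv_of_pos h8 hX0]
  have hle := setIntegral_Icc_le_setIntegral_Ici (g := fun M => 1 / (64 * π ^ 2 * X) * M⁻¹)
    (by linarith)
    (integrableOn_rho_div_sub hm (by linarith)) (fun M (hM : 4 * m ^ 2 ≤ M) =>
      div_nonneg (rho_nonneg m M) (by linarith))
    (continuousOn_const.mul (continuousOn_id.inv₀ fun M hM => (h8.trans_le hM.1).ne')).integrableOn_Icc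
    hlower
  rw [hinv] at hle
  calc log (X / (8 * m ^ 2)) / (64 * π ^ 2)
      = X * (1 / (64 * π ^ 2 * X) * log (X / (8 * m ^ 2))) := by field_simp
    _ ≤ X * Jfun m (-X) := mul_le_mul_of_nonneg_left hle hX0.le

lemma tendsto_mul_Jfun_atBot {m : ℝ} (hm : 0 < m) : Tendsto (fun t => t * Jfun m t) atBot atBot := by
  have h8 : 0 < 8 * m ^ 2 := by positivity
  have hlog : Tendsto (fun t : ℝ => -(log (-t / (8 * m ^ 2)) / (64 * π ^ 2))) atBot atBot :=
    tendsto_neg_atTop_atBot.comp <| (tendsto_log_atTop.comp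
      (tendsto_neg_atBot_atTop.atTop_div_const h8)).atTop_div_const (by positivity)
  refine tendsto_atBot_mono' _ ?_ hlog
  filter_upwards [eventually_le_atBot (-(8 * m ^ 2))] with t ht
  have := log_div_le_mul_Jfun_neg hm (X := -t) (by linarith)
  rw [neg_neg, neg_mul] at this
  linarith

lemma exists_lt_Jfun_sub {m w : ℝ} (hm : 0 < m) (hw : w < 4 * m ^ 2) (K : ℝ) :
    ∃ u v, w ≤ u ∧ u < v ∧ v < 4 * m ^ 2 ∧ K * (v - u) < Jfun m v - Jfun m u := by
  obtain ⟨c, hc, hJ⟩ := exists_mul_sqrt_le_Jfun_sub hm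
  set ε := min (m ^ 2 / 2) (min ((4 * m ^ 2 - w) / 2) ((c / (|K| + 1)) ^ 2))
  have hε : 0 < ε := lt_min (by positivity) (lt_min (by linarith) (by positivity))
  have hεm : ε ≤ m ^ 2 / 2 := min_le_left _ _
  have hεw : ε ≤ (4 * m ^ 2 - w) / 2 := (min_le_right _ _).trans (min_le_left _ _)
  have hεc : √ε ≤ c / (|K| + 1) :=
    (sqrt_le_sqrt ((min_le_right _ _).trans (min_le_right _ _))).trans_eq (sqrt_sq (by positivity))
  have hKc : K * √ε < c := by
    rw [le_div_iff₀ (by positivity)] at hεc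
    nlinarith [le_abs_self K, sqrt_pos.2 hε]
  refine ⟨4 * m ^ 2 - 2 * ε, 4 * m ^ 2 - ε, by linarith, by linarith, by linarith, ?_⟩
  calc K * (4 * m ^ 2 - ε - (4 * m ^ 2 - 2 * ε)) = K * √ε * √ε := by
        rw [mul_assoc, mul_self_sqrt hε.le]; ring
    _ < c * √ε := mul_lt_mul_of_pos_right hKc (sqrt_pos.2 hε)
    _ ≤ _ := hJ ε hε (by linarith)

lemma exists_lt_weighted_Jfun {m a₁ a₂ : ℝ} (hm : 0 < m) (ha₁ : a₁ < 4 * m ^ 2)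
    (ha₂ : a₂ < 4 * m ^ 2) (b : ℝ) :
    ∃ u v, 0 < u ∧ u < v ∧ v < 4 * m ^ 2 ∧
      (a₁ - u) * (a₂ - u) * Jfun m u - b * u < (a₁ - v) * (a₂ - v) * Jfun m v - b * v := by
  set w := (max (max a₁ a₂) 0 + 4 * m ^ 2) / 2
  have hm4 : 0 < 4 * m ^ 2 := by positivity
  have hw : w < 4 * m ^ 2 := by simp only [w]; linarith [max_lt (max_lt ha₁ ha₂) hm4]
  have hw₀ : 0 < w := by simp only [w]; linarith [le_max_right (max a₁ a₂) 0]
  have ha₁w : a₁ < w := by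
    simp only [w]; linarith [le_max_left a₁ a₂, le_max_left (max a₁ a₂) 0]
  have ha₂w : a₂ < w := by
    simp only [w]; linarith [le_max_right a₁ a₂, le_max_left (max a₁ a₂) 0]
  have hPw : 0 < (w - a₁) * (w - a₂) := mul_pos (by linarith) (by linarith)
  obtain ⟨u, v, hwu, huv, hv, hJ⟩ := exists_lt_Jfun_sub hm hw (|b| / ((w - a₁) * (w - a₂)))
  refine ⟨u, v, by linarith, huv, hv, ?_⟩
  rw [div_mul_eq_mul_div, div_lt_iff₀ hPw] at hJ
  have hJv := Jfun_nonneg m hv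
  have hPwu : (w - a₁) * (w - a₂) ≤ (a₁ - u) * (a₂ - u) := by
    nlinarith [mul_le_mul (sub_le_sub_right hwu a₁) (sub_le_sub_right hwu a₂) (by linarith) (by linarith)]
  have hPuv : (a₁ - u) * (a₂ - u) ≤ (a₁ - v) * (a₂ - v) := by nlinarith
  have hJuv : 0 < Jfun m v - Jfun m u := by
    nlinarith [mul_nonneg (abs_nonneg b) (sub_nonneg.2 huv.le)]
  nlinarith [le_abs_self b, mul_le_mul_of_nonneg_right hPuv hJv,
    mul_le_mul_of_nonneg_right hPwu hJuv.le]

lemma tendsto_weighted_Jfun_div_atBot {m : ℝ} (hm : 0 < m) (a₁ a₂ b : ℝ) :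
    Tendsto (fun t => ((a₁ - t) * (a₂ - t) * Jfun m t - b * t) / t) atBot atBot := by
  have hP : Tendsto (fun t : ℝ => (a₁ * t⁻¹ - 1) * (a₂ * t⁻¹ - 1)) atBot (𝓝 1) := by
    simpa using ((tendsto_inv_atBot_zero.const_mul a₁).sub_const 1).mul
      ((tendsto_inv_atBot_zero.const_mul a₂).sub_const 1)
  refine (tendsto_atBot_add_const_right _ (-b)
    (hP.pos_mul_atBot one_pos (tendsto_mul_Jfun_atBot hm))).congr' ?_
  filter_upwards [eventually_lt_atBot 0] with t ht
  have : t ≠ 0 := ht.ne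
  field_simp
  ring

lemma exists_three_eq_div_add {S : ℝ → ℝ} {u v : ℝ} (hS : ContinuousOn S (Iic v)) (hu : 0 < u)
    (huv : u < v) (hSuv : S u < S v) (hbot : Tendsto (fun t => S t / t) atBot atBot) :
    ∃ b₀ b₁ : ℝ, b₀ ≠ 0 ∧ ∃ γ₀ γ₁ γ₂ : ℝ, γ₀ < 0 ∧ 0 < γ₁ ∧ γ₁ < γ₂ ∧ γ₂ < v ∧
      S γ₀ = b₀ / γ₀ + b₁ ∧ S γ₁ = b₀ / γ₁ + b₁ ∧ S γ₂ = b₀ / γ₂ + b₁ := by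
  set δ := u * (S v - S u) / 2
  have hδ : 0 < δ := div_pos (mul_pos hu (sub_pos.2 hSuv)) two_pos
  set D : ℝ → ℝ := fun γ => γ * S γ - S v * γ + δ
  have hD : ContinuousOn D (Iic v) := by fun_prop
  have hDu : D u < 0 := by simp only [D, δ]; nlinarith
  obtain ⟨t, ht, hSt⟩ := ((eventually_lt_atBot (-1)).and
    (hbot.eventually_lt_atBot (-(|S v| + δ)))).exists
  have hDt : D t < 0 := by
    rw [div_lt_iff_of_neg (by linarith)] at hSt
    have h₁ := mul_lt_mul_of_neg_left hSt (by linarith : t < 0)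
    have h₂ : -S v * t ≤ |S v| * t ^ 2 := by
      nlinarith [mul_le_mul_of_nonneg_right (le_abs_self (S v)) (by linarith : 0 ≤ -t),
        mul_le_mul_of_nonneg_left (by nlinarith : -t ≤ t ^ 2) (abs_nonneg (S v))]
    have h₃ : δ ≤ δ * t ^ 2 := le_mul_of_one_le_right hδ.le (by nlinarith)
    simp only [D]
    nlinarith
  have hsub : ∀ {a b}, b ≤ v → Icc a b ⊆ Iic v := fun hb x hx => hx.2.trans hb
  obtain ⟨γ₀, ⟨-, hγ₀⟩, hD₀⟩ := intermediate_value_Ioo (by linarith) (hD.mono (hsub (hu.le.trans huv.le)))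
    (show (0 : ℝ) ∈ Ioo (D t) (D 0) by simp [D, hDt, hδ])
  obtain ⟨γ₁, ⟨hγ₁, hγ₁u⟩, hD₁⟩ := intermediate_value_Ioo' hu.le (hD.mono (hsub huv.le))
    (show (0 : ℝ) ∈ Ioo (D u) (D 0) by simp [D, hDu, hδ])
  obtain ⟨γ₂, ⟨hγ₂u, hγ₂⟩, hD₂⟩ := intermediate_value_Ioo huv.le (hD.mono (hsub le_rfl))
    ⟨hDu, by simp only [D]; linarith⟩
  have hsolve : ∀ γ, γ ≠ 0 → D γ = 0 → S γ = -δ / γ + S v := fun γ hγ hDγ => by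
    simp only [D] at hDγ
    field_simp
    linarith
  exact ⟨-δ, S v, by linarith, γ₀, γ₁, γ₂, hγ₀, hγ₁, by linarith, hγ₂,
    hsolve γ₀ hγ₀.ne hD₀, hsolve γ₁ hγ₁.ne' hD₁, hsolve γ₂ (by linarith) hD₂⟩

theorem stmt_7 (m : ℝ) (hm : 0 < m) (a₁ a₂ : ℝ)
    (ha₁ : a₁ < 4 * m ^ 2) (ha₂ : a₂ < 4 * m ^ 2) :
    ∀ b₂ : ℝ, ∃ b₀ b₁ : ℝ, b₀ ≠ 0 ∧
      ∃ γ₀ γ₁ γ₂ : ℝ,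
        γ₀ ≠ γ₁ ∧ γ₀ ≠ γ₂ ∧ γ₁ ≠ γ₂ ∧
        γ₀ ≠ 0 ∧ γ₁ ≠ 0 ∧ γ₂ ≠ 0 ∧
        γ₀ < 4 * m ^ 2 ∧ γ₁ < 4 * m ^ 2 ∧ γ₂ < 4 * m ^ 2 ∧
        (a₁ - γ₀) * (a₂ - γ₀) * Jfun m γ₀ = b₀ / γ₀ + b₁ + b₂ * γ₀ ∧
        (a₁ - γ₁) * (a₂ - γ₁) * Jfun m γ₁ = b₀ / γ₁ + b₁ + b₂ * γ₁ ∧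
        (a₁ - γ₂) * (a₂ - γ₂) * Jfun m γ₂ = b₀ / γ₂ + b₁ + b₂ * γ₂ := by
  intro b₂
  obtain ⟨u, v, hu, huv, hv, hS⟩ := exists_lt_weighted_Jfun hm ha₁ ha₂ b₂
  have hcont := continuousOn_Jfun hm hv
  obtain ⟨b₀, b₁, hb₀, γ₀, γ₁, γ₂, h₀, h₁, h₁₂, h₂, e₀, e₁, e₂⟩ :=
    exists_three_eq_div_add (S := fun γ => (a₁ - γ) * (a₂ - γ) * Jfun m γ - b₂ * γ)
      (by fun_prop) hu huv hS (tendsto_weighted_Jfun_div_atBot hm a₁ a₂ b₂)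
  have hm4 : 0 < 4 * m ^ 2 := by positivity
  exact ⟨b₀, b₁, hb₀, γ₀, γ₁, γ₂, (h₀.trans h₁).ne, (h₀.trans (h₁.trans h₁₂)).ne, h₁₂.ne,
    h₀.ne, h₁.ne', (h₁.trans h₁₂).ne', by linarith, by linarith, by linarith,
    by linarith, by linarith, by linarith⟩
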